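/- Let D be a finite set with |D| = n ≥ 1, let m ≥ 1, let p(n) be the number of integer partitions of n, and let g_1, …, g_{p(n)} ∈ Sym(D) have pairwise distinct cycle types realizing all cycle types in Sym(D). For each r let k_{r1}, …, k_{rℓ_r} be the cycle type of g_r, and let C_{g_r} be the set of permutations in Sym(D) with the same cycle type as g_r. Then the number of m-endomorphisms on D⁺, up to combinatorial equivalence, equals (1/n!) · Σ_{r=1}^{p(n)} |C_{g_r}| · ∏_{i=1}^{ℓ_r} ( Σ_{k=1}^{m} ( Σ_{j | k_{ri}} j·c(g_r, j) )^k ). -/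

import Mathlib

/-- The cycle type of a permutation of a finite set, *including* fixed points as
cycles of length `1`. -/
def fullCycleType {D : Type*} [Fintype D] [DecidableEq D] (g : Equiv.Perm D) : Multiset ℕ :=
  g.cycleType + Multiset.replicate (Fintype.card D - g.support.card) 1

/-- The number of cycles of length `j` in the cycle decomposition of `g`
(fixed points counted as cycles of length `1`). -/
def cycleCount {D : Type*} [Fintype D] [DecidableEq D] (g : Equiv.Perm D) (j : ℕ) : ℕ :=
  Multiset.count j (fullCycleType g)

/-!
By Burnside's lemma, the number of classes is `(1/n!) ∑ₑ |Fix e|`, where a permutation `e` acts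
on an `m`-endomorphism, viewed as a map `f : D → Wₘ` into the words of length at most `m`, by
`f ↦ e ∘ f ∘ e⁻¹`. A map fixed by `e` is determined by its values at one point of each cycle of
`e`, and on a cycle of length `ℓ` that value can be any word fixed by `e ^ ℓ`. These are the
words over the `∑_{j ∣ ℓ} j · c(e, j)` letters fixed by `e ^ ℓ`, so there are
`∑_{k=1}^m (∑_{j ∣ ℓ} j · c(e, j)) ^ k` of them. The resulting product over the cycles of `e`
depends only on the cycle type of `e`, so the Burnside sum can be grouped by cycle types.
-/

open Equiv Function Finset

theorem Function.iterate_eq_iterate_of_isPeriodicPt {α β : Type*} {f : α → α} {g : β → β}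
    {x : α} {b : β} (hx : x ∈ periodicPts f) (hb : IsPeriodicPt g (minimalPeriod f x) b)
    {i j : ℕ} (h : f^[i] x = f^[j] x) : g^[i] b = g^[j] b := by
  have hpos := minimalPeriod_pos_of_mem_periodicPts hx
  have hmod : i % minimalPeriod f x = j % minimalPeriod f x :=
    iterate_injOn_Iio_minimalPeriod (Nat.mod_lt _ hpos) (Nat.mod_lt _ hpos)
      (by simpa only [iterate_mod_minimalPeriod_eq] using h)
  rw [← hb.iterate_mod_apply i, hmod, hb.iterate_mod_apply]

theorem card_quot_mul_card_eq_sum_card_fixed {G X : Type*} [Group G] [Fintype G] [Finite X]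
    (ρ : G →* Perm X) :
    Nat.card (Quot fun x y : X => ∃ g, ρ g x = y) * Fintype.card G =
      ∑ g, Nat.card {x // ρ g x = x} := by
  let _ : MulAction G X := MulAction.compHom X ρ
  classical
  have := Fintype.ofFinite X
  have hquot : (Quot fun x y : X => ∃ g, ρ g x = y) ≃ MulAction.orbitRel.Quotient G X :=
    Quot.congrRight fun x y => by
      rw [MulAction.orbitRel_apply, MulAction.mem_orbit_iff]
      constructor
      · rintro ⟨g, rfl⟩
        exact ⟨g⁻¹, inv_smul_smul g x⟩
      · rintro ⟨g, rfl⟩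
        exact ⟨g⁻¹, inv_smul_smul g y⟩
  rw [Nat.card_congr hquot, Nat.card_eq_fintype_card,
    ← MulAction.sum_card_fixedBy_eq_card_orbits_mul_card_group]
  refine sum_congr rfl fun g _ => ?_
  rw [← Nat.card_eq_fintype_card]
  rfl

theorem Finset.sum_comp_eq_sum_card_smul {X ι Y M : Type*} [Fintype X] [Fintype ι]
    [DecidableEq Y] [AddCommMonoid M] (κ : X → Y) (g : ι → X)
    (hdistinct : ∀ r s, r ≠ s → κ (g r) ≠ κ (g s)) (hall : ∀ x, ∃ r, κ x = κ (g r))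
    (F : Y → M) :
    ∑ x, F (κ x) = ∑ r, Nat.card {x // κ x = κ (g r)} • F (κ (g r)) := by
  rw [sum_comp]
  symm
  refine sum_nbij (fun r => κ (g r)) (fun r _ => mem_image_of_mem κ (mem_univ _))
    (fun r _ s _ h => by_contra fun hrs => hdistinct r s hrs h) (fun y hy => ?_) fun r _ => ?_
  · obtain ⟨x, -, rfl⟩ := mem_image.1 hy
    obtain ⟨r, hr⟩ := hall x
    exact ⟨r, mem_univ r, hr.symm⟩
  · rw [Nat.card_eq_fintype_card, Fintype.card_subtype]

namespace Equiv.Perm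

section Cycles

variable {α : Type*}

theorem mem_periodicPts [Finite α] (σ : Perm α) (x : α) : x ∈ periodicPts σ :=
  σ.injective.mem_periodicPts x

theorem SameCycle.exists_iterate_eq [Finite α] {σ : Perm α} {x y : α} (h : σ.SameCycle x y) :
    ∃ k, σ^[k] x = y := by
  obtain ⟨k, -, hk⟩ := h.exists_pow_eq'
  exact ⟨k, hk⟩

theorem SameCycle.minimalPeriod_eq [Finite α] {σ : Perm α} {x y : α} (h : σ.SameCycle x y) :
    minimalPeriod σ x = minimalPeriod σ y := by
  obtain ⟨k, rfl⟩ := h.exists_iterate_eq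
  exact (minimalPeriod_apply_iterate (σ.mem_periodicPts x) k).symm

/-- The cycles of `σ`, fixed points included as cycles of length `1`. -/
abbrev Cycles (σ : Perm α) : Type _ := Quotient (SameCycle.setoid σ)

noncomputable def Cycles.length [Finite α] {σ : Perm α} : σ.Cycles → ℕ :=
  Quotient.lift (minimalPeriod σ) fun _ _ => SameCycle.minimalPeriod_eq

@[simp]
theorem Cycles.length_mk [Finite α] {σ : Perm α} (x : α) :
    Cycles.length (⟦x⟧ : σ.Cycles) = minimalPeriod σ x := rfl

theorem Cycles.length_eq_minimalPeriod_out [Finite α] {σ : Perm α} (ω : σ.Cycles) :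
    ω.length = minimalPeriod σ ω.out := by
  conv_lhs => rw [← Quotient.out_eq ω]
  rfl

theorem Cycles.length_pos [Finite α] {σ : Perm α} (ω : σ.Cycles) : 0 < ω.length :=
  Quotient.inductionOn ω fun x => minimalPeriod_pos_of_mem_periodicPts (σ.mem_periodicPts x)

variable [Fintype α] [DecidableEq α] (σ : Perm α)

instance : Fintype σ.Cycles := @Quotient.fintype _ _ _ (instDecidableRelSameCycle σ)

instance : DecidableEq σ.Cycles := @Quotient.decidableEq _ _ (instDecidableRelSameCycle σ)

theorem card_sameCycle (x : α) : #{y | σ.SameCycle x y} = minimalPeriod σ x := by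
  have hpos := minimalPeriod_pos_of_mem_periodicPts (σ.mem_periodicPts x)
  have himage : ({y | σ.SameCycle x y} : Finset α) =
      (range (minimalPeriod σ x)).image (σ^[·] x) := by
    ext y
    simp only [mem_filter, mem_univ, true_and, mem_image, mem_range]
    constructor
    · intro h
      obtain ⟨k, rfl⟩ := h.exists_iterate_eq
      exact ⟨k % minimalPeriod σ x, Nat.mod_lt _ hpos, iterate_mod_minimalPeriod_eq⟩
    · rintro ⟨k, -, rfl⟩
      rw [← coe_pow, sameCycle_pow_right]
  rw [himage, card_image_of_injOn (fun i hi j hj h => iterate_injOn_Iio_minimalPeriod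
    (mem_range.1 hi) (mem_range.1 hj) h), card_range]

theorem card_filter_mk_eq (ω : σ.Cycles) : #{x | (⟦x⟧ : σ.Cycles) = ω} = ω.length := by
  induction ω using Quotient.inductionOn with | h x₀ => ?_
  rw [Cycles.length_mk, ← card_sameCycle]
  congr 1
  ext x
  simp only [mem_filter, mem_univ, true_and, Quotient.eq]
  exact ⟨SameCycle.symm, SameCycle.symm⟩

theorem card_support_cycleOf {x : α} (hx : σ x ≠ x) :
    #(σ.cycleOf x).support = minimalPeriod σ x := by
  have hcyc := σ.isCycleOn_support_cycleOf x
  have hmem : x ∈ (σ.cycleOf x).support :=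
    mem_support_cycleOf_iff.2 ⟨SameCycle.refl σ x, mem_support.2 hx⟩
  refine Nat.dvd_antisymm ?_ ?_
  · exact (hcyc.pow_apply_eq hmem).1 (isPeriodicPt_minimalPeriod σ x)
  · exact isPeriodicPt_iff_minimalPeriod_dvd.1 ((hcyc.pow_apply_eq hmem).2 dvd_rfl)

theorem card_cycles_length_eq_one :
    #{ω : σ.Cycles | ω.length = 1} = Fintype.card α - #σ.support := by
  have himage : ({ω | ω.length = 1} : Finset σ.Cycles) =
      ({x | σ x = x} : Finset α).image (fun x => (⟦x⟧ : σ.Cycles)) := by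
    ext ω
    induction ω using Quotient.inductionOn with | h y => ?_
    simp only [mem_filter, mem_univ, true_and, mem_image, Cycles.length_mk,
      minimalPeriod_eq_one_iff_isFixedPt]
    refine ⟨fun hy => ⟨y, hy, rfl⟩, ?_⟩
    rintro ⟨x, hx, hxy⟩
    rwa [← (Quotient.eq.1 hxy).eq_of_left hx]
  have hinj : Set.InjOn (fun x => (⟦x⟧ : σ.Cycles)) ({x | σ x = x} : Finset α) :=
    fun x hx _ _ hxy => (Quotient.eq.1 hxy).eq_of_left (mem_filter.1 hx).2
  rw [himage, card_image_of_injOn hinj, ← sum_cycleType, ← card_fixedPoints,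
    Fintype.card_subtype]
  rfl

theorem cycleType_eq_map_length :
    σ.cycleType = ({ω | ω.length ≠ 1} : Finset σ.Cycles).val.map Cycles.length := by
  have hmoved : ∀ ω : σ.Cycles, ω.length ≠ 1 ↔ ω.out ∈ σ.support := fun ω => by
    rw [Cycles.length_eq_minimalPeriod_out, Ne, minimalPeriod_eq_one_iff_isFixedPt, mem_support]
    rfl
  have himage : σ.cycleFactorsFinset =
      ({ω | ω.length ≠ 1} : Finset σ.Cycles).image (fun ω => σ.cycleOf ω.out) := by
    ext c
    simp only [mem_image, mem_filter, mem_univ, true_and, hmoved]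
    constructor
    · intro hc
      obtain ⟨a, ha⟩ := (mem_cycleFactorsFinset_iff.1 hc).1.nonempty_support
      have hsa : σ.SameCycle (⟦a⟧ : σ.Cycles).out a := Quotient.mk_out (s := SameCycle.setoid σ) a
      refine ⟨⟦a⟧, hsa.mem_support_iff.2 (mem_cycleFactorsFinset_support_le hc ha), ?_⟩
      rw [hsa.cycleOf_eq, cycle_is_cycleOf ha hc]
    · rintro ⟨ω, hω, rfl⟩
      exact cycleOf_mem_cycleFactorsFinset_iff.2 hω
  have hinj : Set.InjOn (fun ω : σ.Cycles => σ.cycleOf ω.out)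
      ({ω | ω.length ≠ 1} : Finset σ.Cycles) := fun ω hω ω' hω' h => by
    simp only [coe_filter, mem_univ, true_and, Set.mem_ofPred_eq, hmoved] at hω hω'
    rw [← Quotient.out_eq ω, ← Quotient.out_eq ω']
    exact Quotient.sound ((sameCycle_iff_cycleOf_eq_of_mem_support hω hω').2 h)
  rw [cycleType_def, himage, image_val_of_injOn hinj, Multiset.map_map]
  refine Multiset.map_congr rfl fun ω hω => ?_
  change #(σ.cycleOf ω.out).support = ω.length
  rw [card_support_cycleOf, Cycles.length_eq_minimalPeriod_out]
  exact mem_support.1 ((hmoved ω).1 (mem_filter.1 hω).2)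

theorem fullCycleType_eq_map_length :
    fullCycleType σ = (univ : Finset σ.Cycles).val.map Cycles.length := by
  rw [← Multiset.filter_add_not (·.length = 1) univ.val, Multiset.map_add, add_comm,
    fullCycleType, ← card_cycles_length_eq_one, cycleType_eq_map_length]
  congr 1
  refine (Multiset.eq_replicate.2 ⟨?_, fun k hk => ?_⟩).symm
  · rw [Multiset.card_map]
    rfl
  · obtain ⟨ω, hω, rfl⟩ := Multiset.mem_map.1 hk
    exact (Multiset.mem_filter.1 hω).2

theorem cycleCount_eq_card (j : ℕ) : cycleCount σ j = #{ω : σ.Cycles | ω.length = j} := by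
  rw [cycleCount, fullCycleType_eq_map_length, Multiset.count_map, card_def, filter_val]
  simp_rw [eq_comm]

theorem sum_minimalPeriod {M : Type*} [AddCommMonoid M] (F : ℕ → M) :
    ∑ x, F (minimalPeriod σ x) = ∑ ω : σ.Cycles, ω.length • F ω.length := by
  rw [← sum_fiberwise univ (fun x => (⟦x⟧ : σ.Cycles))]
  refine sum_congr rfl fun ω _ => ?_
  rw [sum_congr rfl fun x hx => by rw [← Cycles.length_mk, (mem_filter.1 hx).2], sum_const,
    card_filter_mk_eq]

theorem card_fixedPoints_pow {ℓ : ℕ} (hℓ : 0 < ℓ) :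
    Nat.card {x // (σ ^ ℓ) x = x} = ∑ j ∈ ℓ.divisors, j * cycleCount σ j := by
  calc Nat.card {x // (σ ^ ℓ) x = x}
      = ∑ x, if minimalPeriod σ x ∣ ℓ then 1 else 0 := by
        simp_rw [← isPeriodicPt_iff_minimalPeriod_dvd]
        rw [Nat.card_eq_fintype_card, Fintype.card_subtype, card_filter]
        rfl
    _ = ∑ ω : σ.Cycles, ω.length • if ω.length ∣ ℓ then 1 else 0 :=
        sum_minimalPeriod σ fun k => if k ∣ ℓ then 1 else 0
    _ = ∑ ω : σ.Cycles with ω.length ∣ ℓ, ω.length := by simp [sum_filter]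
    _ = ∑ j ∈ ℓ.divisors, ∑ ω : σ.Cycles with ω.length = j, ω.length := by
        rw [← sum_fiberwise_of_maps_to (g := Cycles.length) (t := ℓ.divisors)
          fun ω hω => Nat.mem_divisors.2 ⟨(mem_filter.1 hω).2, hℓ.ne'⟩]
        refine sum_congr rfl fun j hj => ?_
        rw [filter_filter]
        congr 1
        ext ω
        simp only [mem_filter, mem_univ, true_and, and_iff_right_iff_imp]
        rintro rfl
        exact Nat.dvd_of_mem_divisors hj
    _ = ∑ j ∈ ℓ.divisors, j * cycleCount σ j := by
        refine sum_congr rfl fun j _ => ?_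
        rw [sum_congr rfl fun ω hω => (mem_filter.1 hω).2, sum_const, smul_eq_mul,
          cycleCount_eq_card, mul_comm]

theorem card_semiconj {β : Type*} (τ : β → β) :
    Nat.card {f : α → β // Semiconj f σ τ} =
      ∏ ω : σ.Cycles, Nat.card {b // IsPeriodicPt τ ω.length b} := by
  have hrep : ∀ x, ∃ k, σ^[k] (⟦x⟧ : σ.Cycles).out = x := fun x =>
    (Quotient.mk_out (s := SameCycle.setoid σ) x).exists_iterate_eq
  rw [← Nat.card_pi]
  refine Nat.card_eq_of_bijective (fun f ω => ⟨f.1 ω.out, ?_⟩) ⟨?_, fun v => ?_⟩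
  · rw [Cycles.length_eq_minimalPeriod_out]
    exact (isPeriodicPt_minimalPeriod σ _).map f.2
  · rintro ⟨f, hf⟩ ⟨g, hg⟩ h
    refine Subtype.ext (funext fun x => ?_)
    obtain ⟨k, hk⟩ := hrep x
    have hfg : f (⟦x⟧ : σ.Cycles).out = g (⟦x⟧ : σ.Cycles).out :=
      congrArg Subtype.val (congrFun h ⟦x⟧)
    change f x = g x
    rw [← hk, (hf.iterate_right k).eq, (hg.iterate_right k).eq, hfg]
  · choose k hk using hrep
    have transfer : ∀ (ω : σ.Cycles) i j, σ^[i] ω.out = σ^[j] ω.out →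
        τ^[i] (v ω).1 = τ^[j] (v ω).1 := fun ω i j h =>
      iterate_eq_iterate_of_isPeriodicPt (σ.mem_periodicPts _)
        (Cycles.length_eq_minimalPeriod_out ω ▸ (v ω).2) h
    refine ⟨⟨fun x => τ^[k x] (v ⟦x⟧).1, fun x => ?_⟩, funext fun ω => Subtype.ext ?_⟩
    · have hσx : (⟦σ x⟧ : σ.Cycles) = ⟦x⟧ := Quotient.sound (sameCycle_apply_left.2 (.refl σ x))
      have hkσx := hk (σ x)
      change τ^[k (σ x)] (v ⟦σ x⟧).1 = τ (τ^[k x] (v ⟦x⟧).1)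
      rw [← iterate_succ_apply' τ]
      rw [hσx] at hkσx ⊢
      refine transfer _ _ _ ?_
      rw [hkσx, iterate_succ_apply', hk x]
    · have hkω := hk ω.out
      rw [Quotient.out_eq] at hkω
      change τ^[k ω.out] (v ⟦ω.out⟧).1 = (v ω).1
      rw [Quotient.out_eq]
      exact transfer ω _ 0 hkω

end Cycles

variable {α β : Type*}

def arrowConj (τ : Perm α →* Perm β) : Perm α →* Perm (α → β) where
  toFun e := arrowCongr e (τ e)
  map_one' := by rw [map_one]; rfl
  map_mul' e e' := by rw [map_mul]; rfl

theorem arrowConj_apply (τ : Perm α →* Perm β) (e : Perm α) (f : α → β) (a : α) :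
    arrowConj τ e f a = τ e (f (e.symm a)) := rfl

theorem arrowConj_apply_eq_iff {τ : Perm α →* Perm β} {e : Perm α} {f f' : α → β} :
    arrowConj τ e f = f' ↔ ∀ a, f' (e a) = τ e (f a) := by
  constructor
  · rintro rfl a
    rw [arrowConj_apply, symm_apply_apply]
  · intro h
    funext a
    rw [arrowConj_apply, ← h, apply_symm_apply]

end Equiv.Perm

namespace FreeSemigroup

variable {α β : Type*}

theorem map_mk (f : α → β) (a : α) (l : List α) : map f ⟨a, l⟩ = ⟨f a, l.map f⟩ := by
  induction l generalizing a with
  | nil => rfl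
  | cons b l ih =>
    change map f (of a * ⟨b, l⟩) = _
    rw [map_mul, map_of, ih]
    rfl

theorem map_mk_eq_self_iff (f : α → α) (a : α) (l : List α) :
    map f ⟨a, l⟩ = ⟨a, l⟩ ↔ f a = a ∧ l.map f = l := by
  rw [map_mk, mk.injEq]

instance [Finite α] (m : ℕ) : Finite {w : FreeSemigroup α // w.length ≤ m} :=
  have := (List.finite_length_le α m).to_subtype
  Finite.of_injective
    (fun w => (w.1.head, (⟨w.1.tail, Nat.le_of_succ_le w.2⟩ : {l : List α | l.length ≤ m})))
    fun _ _ h => Subtype.ext (FreeSemigroup.ext (congrArg Prod.fst h)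
      (congrArg (fun p => p.2.1) h))

def fixedWordsSuccEquiv (f : α → α) (m : ℕ) :
    {w : {w : FreeSemigroup α // w.length ≤ m + 1} // map f w.1 = w.1} ≃
      {a // f a = a} × Option {w : {w : FreeSemigroup α // w.length ≤ m} // map f w.1 = w.1} where
  toFun
    | ⟨⟨⟨a, []⟩, _⟩, hw⟩ => (⟨a, ((map_mk_eq_self_iff f a []).1 hw).1⟩, none)
    | ⟨⟨⟨a, b :: t⟩, hl⟩, hw⟩ =>
      (⟨a, ((map_mk_eq_self_iff f a _).1 hw).1⟩,
        some ⟨⟨⟨b, t⟩, Nat.le_of_succ_le_succ hl⟩, by simp_all [map_mk_eq_self_iff]⟩)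
  invFun
    | (a, none) => ⟨⟨⟨a.1, []⟩, Nat.succ_le_succ m.zero_le⟩, by simp [map_mk_eq_self_iff, a.2]⟩
    | (a, some ⟨⟨⟨b, t⟩, hl⟩, hw⟩) =>
      ⟨⟨⟨a.1, b :: t⟩, Nat.succ_le_succ hl⟩, by simp_all [map_mk_eq_self_iff, a.2]⟩
  left_inv := by rintro ⟨⟨⟨a, _ | ⟨b, t⟩⟩, hl⟩, hw⟩ <;> rfl
  right_inv := by rintro ⟨a, _ | ⟨⟨⟨b, t⟩, hl⟩, hw⟩⟩ <;> rfl

theorem card_fixed_words [Finite α] (f : α → α) (m : ℕ) :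
    Nat.card {w : {w : FreeSemigroup α // w.length ≤ m} // map f w.1 = w.1} =
      ∑ k ∈ Icc 1 m, Nat.card {a // f a = a} ^ k := by
  induction m with
  | zero =>
    have : IsEmpty {w : FreeSemigroup α // w.length ≤ 0} := ⟨fun w => Nat.not_succ_le_zero _ w.2⟩
    simp
  | succ m ih =>
    rw [Nat.card_congr (fixedWordsSuccEquiv f m), Nat.card_prod, Finite.card_option, ih,
      ← Ico_add_one_right_eq_Icc, ← Ico_add_one_right_eq_Icc, sum_Ico_eq_sum_range,
      sum_Ico_eq_sum_range, Nat.add_sub_cancel, Nat.add_sub_cancel, sum_range_succ', mul_add,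
      mul_sum]
    simp only [← pow_succ', add_comm 1, mul_one, zero_add, pow_one]

def relabel (m : ℕ) : Perm α →* Perm {w : FreeSemigroup α // w.length ≤ m} where
  toFun e := (Functor.mapEquiv FreeSemigroup e).subtypeEquiv fun w =>
    iff_of_eq (congrArg (· ≤ m) (length_map e w).symm)
  map_one' := Equiv.ext fun w => Subtype.ext (id_map w.1)
  map_mul' e e' := Equiv.ext fun w => Subtype.ext (comp_map e' e w.1)

theorem relabel_apply_coe (m : ℕ) (e : Perm α) (w : {w : FreeSemigroup α // w.length ≤ m}) :
    (relabel m e w).1 = map e w.1 := rfl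

theorem isPeriodicPt_relabel_iff {m : ℕ} {e : Perm α} {n : ℕ}
    {w : {w : FreeSemigroup α // w.length ≤ m}} :
    IsPeriodicPt (relabel m e) n w ↔ map ⇑(e ^ n) w.1 = w.1 := by
  rw [IsPeriodicPt, IsFixedPt, ← Perm.coe_pow, ← map_pow, Subtype.ext_iff, relabel_apply_coe]

def boundedHomEquiv (m : ℕ) :
    {φ : FreeSemigroup α →ₙ* FreeSemigroup α // ∀ a, (φ (of a)).length ≤ m} ≃
      (α → {w : FreeSemigroup α // w.length ≤ m}) :=
  (lift.symm.subtypeEquiv (q := fun f : α → FreeSemigroup α => ∀ a, (f a).length ≤ m)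
    fun _ => Iff.rfl).trans
    (Equiv.subtypePiEquivPi (p := fun (_ : α) (w : FreeSemigroup α) => w.length ≤ m))

theorem boundedHomEquiv_apply_coe {m : ℕ}
    (φ : {φ : FreeSemigroup α →ₙ* FreeSemigroup α // ∀ a, (φ (of a)).length ≤ m}) (a : α) :
    (boundedHomEquiv m φ a).1 = φ.1 (of a) := rfl

theorem comp_map_eq_map_comp_iff {m : ℕ}
    (φ ψ : {φ : FreeSemigroup α →ₙ* FreeSemigroup α // ∀ a, (φ (of a)).length ≤ m})
    (e : Perm α) :
    ψ.1.comp (map e) = (map e).comp φ.1 ↔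
      Perm.arrowConj (relabel m) e (boundedHomEquiv m φ) = boundedHomEquiv m ψ := by
  rw [Perm.arrowConj_apply_eq_iff]
  constructor
  · intro h a
    rw [Subtype.ext_iff, relabel_apply_coe, boundedHomEquiv_apply_coe, boundedHomEquiv_apply_coe]
    exact DFunLike.congr_fun h (of a)
  · intro h
    refine hom_ext (funext fun a => ?_)
    have := congrArg Subtype.val (h a)
    rwa [relabel_apply_coe, boundedHomEquiv_apply_coe, boundedHomEquiv_apply_coe] at this

end FreeSemigroup

open FreeSemigroup

theorem card_fixed_arrowConj_relabel {α : Type*} [Fintype α] [DecidableEq α] (m : ℕ)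
    (e : Perm α) :
    Nat.card {f : α → {w : FreeSemigroup α // w.length ≤ m} //
        Perm.arrowConj (relabel m) e f = f} =
      ((fullCycleType e).map fun ℓ =>
        ∑ k ∈ Icc 1 m, (∑ j ∈ ℓ.divisors, j * cycleCount e j) ^ k).prod := by
  rw [Nat.card_congr (Equiv.subtypeEquivRight (q := fun f => Semiconj f e (relabel m e))
      fun f => Perm.arrowConj_apply_eq_iff),
    e.card_semiconj, e.fullCycleType_eq_map_length, Multiset.map_map, ← prod_eq_multiset_prod]
  refine prod_congr rfl fun ω _ => ?_
  rw [Nat.card_congr (Equiv.subtypeEquivRight fun w => isPeriodicPt_relabel_iff),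
    card_fixed_words, Function.comp_apply, e.card_fixedPoints_pow ω.length_pos]

theorem number_of_m_endomorphisms_via_partitions_general
    {D : Type*} [Fintype D] [DecidableEq D] {n m : ℕ}
    (hcard : Fintype.card D = n)
    (g : Fin (Fintype.card (Nat.Partition n)) → Equiv.Perm D)
    (hdistinct : ∀ r s, r ≠ s → fullCycleType (g r) ≠ fullCycleType (g s))
    (hall : ∀ h : Equiv.Perm D, ∃ r, fullCycleType h = fullCycleType (g r)) :
    (Nat.card (Quot (fun φ ψ : {φ : FreeSemigroup D →ₙ* FreeSemigroup D //
          ∀ d : D, (φ (FreeSemigroup.of d)).length ≤ m} =>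
        ∃ e : Equiv.Perm D,
          (ψ : FreeSemigroup D →ₙ* FreeSemigroup D).comp (FreeSemigroup.map ⇑e)
            = (FreeSemigroup.map ⇑e).comp
                (φ : FreeSemigroup D →ₙ* FreeSemigroup D))) : ℚ)
      = (1 / (n.factorial : ℚ)) * ∑ r : Fin (Fintype.card (Nat.Partition n)),
          ((Nat.card {h : Equiv.Perm D // fullCycleType h = fullCycleType (g r)} : ℚ) *
            ((((fullCycleType (g r)).map (fun ki =>
              ∑ k ∈ Finset.Icc 1 m,
                (∑ j ∈ ki.divisors, j * cycleCount (g r) j) ^ k)).prod : ℕ) : ℚ)) := by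
  have hburnside :=
    card_quot_mul_card_eq_sum_card_fixed (Perm.arrowConj (relabel (α := D) m))
  simp only [card_fixed_arrowConj_relabel, cycleCount] at hburnside ⊢
  rw [Fintype.card_perm, hcard, sum_comp_eq_sum_card_smul fullCycleType g hdistinct hall
    (fun μ => (μ.map fun ℓ => ∑ k ∈ Icc 1 m, (∑ j ∈ ℓ.divisors, j * μ.count j) ^ k).prod)]
    at hburnside
  rw [Nat.card_congr (Quot.congr (boundedHomEquiv m)
    (rb := fun f f' => ∃ e, Perm.arrowConj (relabel m) e f = f') fun φ ψ =>
      exists_congr fun e => comp_map_eq_map_comp_iff φ ψ e)]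
  rw [one_div, inv_mul_eq_div, eq_div_iff (by positivity)]
  exact_mod_cast hburnside

/-- **Corollary 1.** Let `|D| = n ≥ 1`, let `p(n)` be the number of integer partitions of `n`,
and let `g_1, …, g_{p(n)} ∈ Sym(D)` have pairwise distinct cycle types, realizing all cycle
types.  Writing `C_{g_r}` for the set of permutations with the same cycle type as `g_r`, the
number of `m`-endomorphisms on `D⁺` up to combinatorial equivalence is
`(1/n!) · Σ_{r=1}^{p(n)} |C_{g_r}| · ∏_{cycle lengths kᵢ of g_r}
  (Σ_{k=1}^m (Σ_{j ∣ kᵢ} j·c(g_r,j))^k)`. -/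
theorem number_of_m_endomorphisms_via_partitions
    {D : Type*} [Fintype D] [DecidableEq D] {n m : ℕ} (hn : 1 ≤ n) (hm : 1 ≤ m)
    (hcard : Fintype.card D = n)
    (g : Fin (Fintype.card (Nat.Partition n)) → Equiv.Perm D)
    (hdistinct : ∀ r s, r ≠ s → fullCycleType (g r) ≠ fullCycleType (g s))
    (hall : ∀ h : Equiv.Perm D, ∃ r, fullCycleType h = fullCycleType (g r)) :
    (Nat.card (Quot (fun φ ψ : {φ : FreeSemigroup D →ₙ* FreeSemigroup D //
          ∀ d : D, (φ (FreeSemigroup.of d)).length ≤ m} =>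
        ∃ e : Equiv.Perm D,
          (ψ : FreeSemigroup D →ₙ* FreeSemigroup D).comp (FreeSemigroup.map ⇑e)
            = (FreeSemigroup.map ⇑e).comp
                (φ : FreeSemigroup D →ₙ* FreeSemigroup D))) : ℚ)
      = (1 / (n.factorial : ℚ)) * ∑ r : Fin (Fintype.card (Nat.Partition n)),
          ((Nat.card {h : Equiv.Perm D // fullCycleType h = fullCycleType (g r)} : ℚ) *
            ((((fullCycleType (g r)).map (fun ki =>
              ∑ k ∈ Finset.Icc 1 m,
                (∑ j ∈ ki.divisors, j * cycleCount (g r) j) ^ k)).prod : ℕ) : ℚ)) :=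
  number_of_m_endomorphisms_via_partitions_general hcard g hdistinct hall
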